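/- Suppose $\hat w$ minimizes $F(w) = \frac{1}{2}\|Aw - \xi\|^2 + \frac{\lambda}{2}\|\Omega(\mu_0 + w)\|^2$ over $\mathbb{R}^p$ and $\hat w^{(S)}$ minimizes $F$ over $\{w : w_S = 0\}$, where $S \subseteq [p]$, $\lambda > 0$, and $\Omega$ is diagonal with entries bounded below by $c > 0$. Then $\frac{1}{2}\|A(\hat w^{(S)} - \hat w)\|^2 + \frac{\lambda c^2}{2}\|\hat w_S\|^2 \le \|\hat w_S\| \left(\|A_S^T(A_{-S}\hat w^{(S)}_{-S} - \xi)\| + \lambda\|\Omega_S^2 \mu_{0,S}\|\right)$. -/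

import Mathlib

/-!
Since `F` is quadratic, `F (w + u) = F w + ⟪∇F w, u⟫ + Q u` exactly, with
`Q u = ½‖A u‖² + (λ/2)‖Ω u‖²`. Minimality of `ŵ⁽ˢ⁾` on `{w_S = 0}` forces `∇F ŵ⁽ˢ⁾` to vanish
off `S` (the KKT condition), and minimality of `ŵ` gives `F ŵ ≤ F ŵ⁽ˢ⁾`. Expanding around `ŵ⁽ˢ⁾`
with `u = ŵ - ŵ⁽ˢ⁾` (so `u_S = ŵ_S`) yields `Q u ≤ -∑_{i ∈ S} (∇F ŵ⁽ˢ⁾)_i ŵ_i`; bounding `Q u`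
below using `Ω = diag ω ≥ c` and the right side above by Cauchy–Schwarz gives the inequality.
-/

open Matrix Finset

lemma Real.sum_add_mul_mul_le_sqrt_mul {ι : Type*} (s : Finset ι) (f g h : ι → ℝ) {a : ℝ}
    (ha : 0 ≤ a) :
    ∑ i ∈ s, (f i + a * g i) * h i
      ≤ √(∑ i ∈ s, h i ^ 2) * (√(∑ i ∈ s, f i ^ 2) + a * √(∑ i ∈ s, g i ^ 2)) := by
  have hf := Real.sum_mul_le_sqrt_mul_sqrt s f h
  have hg := mul_le_mul_of_nonneg_left (Real.sum_mul_le_sqrt_mul_sqrt s g h) ha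
  simp only [add_mul, sum_add_distrib, mul_assoc, ← mul_sum]
  linarith

lemma sq_mul_sum_sq_le_sum_mul_sq {ι : Type*} [Fintype ι] (s : Finset ι) {c : ℝ} {ω : ι → ℝ}
    (hc : 0 ≤ c) (hω : ∀ i, c ≤ ω i) (u : ι → ℝ) :
    c ^ 2 * ∑ i ∈ s, u i ^ 2 ≤ ∑ i, (ω i * u i) ^ 2 := by
  rw [mul_sum]
  calc ∑ i ∈ s, c ^ 2 * u i ^ 2
      ≤ ∑ i ∈ s, (ω i * u i) ^ 2 := sum_le_sum fun i _ => by
        rw [mul_pow]; gcongr; exact hω i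
    _ ≤ ∑ i, (ω i * u i) ^ 2 := sum_le_univ_sum_of_nonneg fun _ => sq_nonneg _

lemma eq_zero_of_forall_nonneg_mul_add_mul_sq {a b : ℝ} (h : ∀ t, 0 ≤ a * t + b * t ^ 2) :
    a = 0 := by
  have := discrim_le_zero (a := b) (b := a) (c := 0) fun t => by
    linarith [h t, show t ^ 2 = t * t from sq t]
  rw [discrim] at this
  nlinarith [sq_nonneg a]

lemma sum_mul_mulVec {m ι : Type*} [Fintype m] [Fintype ι] (A : Matrix m ι ℝ) (r : m → ℝ)
    (u : ι → ℝ) : ∑ j, r j * (A *ᵥ u) j = ∑ i, (Aᵀ *ᵥ r) i * u i := by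
  simpa only [dotProduct, mulVec_transpose] using dotProduct_mulVec r A u

noncomputable section

namespace Ridge

variable {m ι : Type*} [Fintype m] [Fintype ι]
  (A : Matrix m ι ℝ) (ξ : m → ℝ) (μ0 ω : ι → ℝ) (lam : ℝ)

def objective (w : ι → ℝ) : ℝ :=
  (1/2) * (∑ j, ((A *ᵥ w) j - ξ j) ^ 2) + (lam/2) * (∑ i, (ω i * (μ0 i + w i)) ^ 2)

def gradient (w : ι → ℝ) (i : ι) : ℝ :=
  (Aᵀ *ᵥ (A *ᵥ w - ξ)) i + lam * (ω i ^ 2 * (μ0 i + w i))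

def quadraticPart (u : ι → ℝ) : ℝ :=
  (1/2) * (∑ j, (A *ᵥ u) j ^ 2) + (lam/2) * (∑ i, (ω i * u i) ^ 2)

variable {A ξ μ0 ω lam}

theorem objective_add (w u : ι → ℝ) :
    objective A ξ μ0 ω lam (w + u) = objective A ξ μ0 ω lam w
      + ∑ i, gradient A ξ μ0 ω lam w i * u i + quadraticPart A ω lam u := by
  have hres : ∑ j, ((A *ᵥ (w + u)) j - ξ j) ^ 2 = ∑ j, ((A *ᵥ w) j - ξ j) ^ 2
      + 2 * ∑ i, (Aᵀ *ᵥ (A *ᵥ w - ξ)) i * u i + ∑ j, (A *ᵥ u) j ^ 2 := by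
    rw [← sum_mul_mulVec, mul_sum, ← sum_add_distrib, ← sum_add_distrib]
    refine sum_congr rfl fun j _ => ?_
    simp only [mulVec_add, Pi.add_apply, Pi.sub_apply]
    ring
  have hpen : ∑ i, (ω i * (μ0 i + (w + u) i)) ^ 2 = ∑ i, (ω i * (μ0 i + w i)) ^ 2
      + 2 * ∑ i, ω i ^ 2 * (μ0 i + w i) * u i + ∑ i, (ω i * u i) ^ 2 := by
    rw [mul_sum, ← sum_add_distrib, ← sum_add_distrib]
    refine sum_congr rfl fun i _ => ?_
    simp only [Pi.add_apply]
    ring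
  have hgrad : ∑ i, gradient A ξ μ0 ω lam w i * u i = ∑ i, (Aᵀ *ᵥ (A *ᵥ w - ξ)) i * u i
      + lam * ∑ i, ω i ^ 2 * (μ0 i + w i) * u i := by
    rw [mul_sum, ← sum_add_distrib]
    exact sum_congr rfl fun i _ => by simp only [gradient]; ring
  simp only [objective, quadraticPart]
  rw [hres, hpen, hgrad]
  ring

theorem quadraticPart_smul (t : ℝ) (u : ι → ℝ) :
    quadraticPart A ω lam (t • u) = t ^ 2 * quadraticPart A ω lam u := by
  have hA : ∀ j, (A *ᵥ (t • u)) j ^ 2 = t ^ 2 * (A *ᵥ u) j ^ 2 := fun j => by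
    rw [mulVec_smul, Pi.smul_apply, smul_eq_mul]; ring
  have hω : ∀ i, (ω i * (t • u) i) ^ 2 = t ^ 2 * (ω i * u i) ^ 2 := fun i => by
    rw [Pi.smul_apply, smul_eq_mul]; ring
  simp only [quadraticPart, hA, hω, ← mul_sum]
  ring

variable {S : Finset ι} {w : ι → ℝ}

theorem sum_gradient_mul_eq_zero
    (hmin : IsMinOn (objective A ξ μ0 ω lam) {v | ∀ i ∈ S, v i = 0} w)
    (hw : ∀ i ∈ S, w i = 0) {d : ι → ℝ} (hd : ∀ i ∈ S, d i = 0) :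
    ∑ i, gradient A ξ μ0 ω lam w i * d i = 0 := by
  refine eq_zero_of_forall_nonneg_mul_add_mul_sq (b := quadraticPart A ω lam d) fun t => ?_
  have hle := isMinOn_iff.mp hmin (w + t • d) fun i hi => by simp [hw i hi, hd i hi]
  have hlin : ∑ i, gradient A ξ μ0 ω lam w i * (t • d) i
      = (∑ i, gradient A ξ μ0 ω lam w i * d i) * t := by
    rw [sum_mul]
    exact sum_congr rfl fun i _ => by rw [Pi.smul_apply, smul_eq_mul]; ring
  rw [objective_add, quadraticPart_smul, hlin] at hle
  linarith

theorem gradient_eq_zero_of_notMem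
    (hmin : IsMinOn (objective A ξ μ0 ω lam) {v | ∀ i ∈ S, v i = 0} w)
    (hw : ∀ i ∈ S, w i = 0) {i : ι} (hi : i ∉ S) :
    gradient A ξ μ0 ω lam w i = 0 := by
  classical
  simpa [Pi.single_apply] using sum_gradient_mul_eq_zero hmin hw (d := Pi.single i 1) fun j hj =>
    Pi.single_eq_of_ne (ne_of_mem_of_not_mem hj hi) 1

theorem quadraticPart_sub_le
    (hmin : IsMinOn (objective A ξ μ0 ω lam) {v | ∀ i ∈ S, v i = 0} w)
    (hw : ∀ i ∈ S, w i = 0) {w' : ι → ℝ}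
    (hw' : objective A ξ μ0 ω lam w' ≤ objective A ξ μ0 ω lam w) :
    quadraticPart A ω lam (w' - w) ≤ -∑ i ∈ S, gradient A ξ μ0 ω lam w i * w' i := by
  have hexp := objective_add (A := A) (ξ := ξ) (μ0 := μ0) (ω := ω) (lam := lam) w (w' - w)
  rw [add_sub_cancel] at hexp
  have hS : ∑ i, gradient A ξ μ0 ω lam w i * (w' - w) i
      = ∑ i ∈ S, gradient A ξ μ0 ω lam w i * w' i := by
    rw [← sum_subset (subset_univ S) fun i _ hi => by
      rw [gradient_eq_zero_of_notMem hmin hw hi, zero_mul]]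
    exact sum_congr rfl fun i hi => by rw [Pi.sub_apply, hw i hi, sub_zero]
  linarith

end Ridge

end

/-- Leave-`S`-out comparison inequality for the ridge objective
`F(w) = ½‖Aw - ξ‖² + (λ/2)‖Ω(μ₀ + w)‖²`: if `ŵ` is the global minimizer and `ŵ⁽ˢ⁾`
minimizes `F` subject to `w_S = 0`, then
`½‖A(ŵ⁽ˢ⁾ - ŵ)‖² + (λc²/2)‖ŵ_S‖² ≤ ‖ŵ_S‖ (‖A_Sᵀ(A_{-S}ŵ⁽ˢ⁾_{-S} - ξ)‖ + λ‖Ω_S² μ₀,S‖)`. -/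
theorem leave_S_out_ridge_inequality
    {n p : ℕ} (A : Matrix (Fin n) (Fin p) ℝ) (ξ : Fin n → ℝ) (μ0 : Fin p → ℝ)
    (ω : Fin p → ℝ) (c lam : ℝ) (hc : 0 < c) (hω : ∀ i, c ≤ ω i) (hlam : 0 < lam)
    (S : Finset (Fin p)) (wh wS : Fin p → ℝ)
    (hwh : ∀ w : Fin p → ℝ,
      (1/2) * (∑ i, (A.mulVec wh i - ξ i)^2) + (lam/2) * (∑ i, (ω i * (μ0 i + wh i))^2)
        ≤ (1/2) * (∑ i, (A.mulVec w i - ξ i)^2) + (lam/2) * (∑ i, (ω i * (μ0 i + w i))^2))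
    (hwS0 : ∀ i ∈ S, wS i = 0)
    (hwSmin : ∀ w : Fin p → ℝ, (∀ i ∈ S, w i = 0) →
      (1/2) * (∑ i, (A.mulVec wS i - ξ i)^2) + (lam/2) * (∑ i, (ω i * (μ0 i + wS i))^2)
        ≤ (1/2) * (∑ i, (A.mulVec w i - ξ i)^2) + (lam/2) * (∑ i, (ω i * (μ0 i + w i))^2)) :
    (1/2) * (∑ i, (A.mulVec (wS - wh) i)^2) + (lam * c^2/2) * (∑ i ∈ S, (wh i)^2)
      ≤ Real.sqrt (∑ i ∈ S, (wh i)^2) *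
        (Real.sqrt (∑ i ∈ S, (Aᵀ.mulVec (A.mulVec wS - ξ) i)^2)
          + lam * Real.sqrt (∑ i ∈ S, (ω i^2 * μ0 i)^2)) := by
  have hQ := Ridge.quadraticPart_sub_le (isMinOn_iff.mpr hwSmin) hwS0 (hwh wS)
  have hgradS : ∑ i ∈ S, Ridge.gradient A ξ μ0 ω lam wS i * wh i
      = ∑ i ∈ S, ((Aᵀ *ᵥ (A *ᵥ wS - ξ)) i + lam * (ω i ^ 2 * μ0 i)) * wh i :=
    sum_congr rfl fun i hi => by rw [Ridge.gradient, hwS0 i hi, add_zero]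
  have hcs := Real.sum_add_mul_mul_le_sqrt_mul S (fun i => (Aᵀ *ᵥ (A *ᵥ wS - ξ)) i)
    (fun i => ω i ^ 2 * μ0 i) (fun i => -wh i) hlam.le
  simp only [neg_sq, mul_neg, sum_neg_distrib] at hcs
  have hpen := mul_le_mul_of_nonneg_left (sq_mul_sum_sq_le_sum_mul_sq S hc.le hω (wh - wS))
    (by positivity : 0 ≤ lam / 2)
  have hwhS : ∑ i ∈ S, (wh - wS) i ^ 2 = ∑ i ∈ S, wh i ^ 2 :=
    sum_congr rfl fun i hi => by rw [Pi.sub_apply, hwS0 i hi, sub_zero]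
  have hsymm : ∑ j, (A *ᵥ (wS - wh)) j ^ 2 = ∑ j, (A *ᵥ (wh - wS)) j ^ 2 := by
    simp only [← neg_sub wh wS, mulVec_neg, Pi.neg_apply, neg_sq]
  rw [hwhS] at hpen
  rw [hsymm]
  unfold Ridge.quadraticPart at hQ
  linarith
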